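/- Let f be a quasiperiodically forced circle homeomorphism over an irrational ω with lift F, and fix ε > 0. Let A ≺ B be minimal F-invariant strips with no F-invariant strip S satisfying A ≺ S ≺ B, and let C := {(θ,x) ∈ T¹×ℝ : φ⁺_A(θ) < x < φ⁻_B(θ)}. Assume there exist a continuous curve γ : T¹ → ℝ whose graph is contained in C and an integer N ≥ 1 such that F^N_θ(γ(θ)) > γ(θ+Nω) for all θ (γ is mapped strictly above itself by the N-th iterate of F). Then for every θ₀ ∈ T¹ and every x₀ > φ⁺_A(θ₀) there exists k ∈ ℕ with (F_ε)^k_{θ₀}(x₀) > φ⁺_B(θ₀ + kω). -/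

import Mathlib

open Filter Topology MeasureTheory
open scoped ENNReal

noncomputable section

/-- The circle `T¹ = ℝ/ℤ`. -/
abbrev T1 := AddCircle (1 : ℝ)

/-- Fiberwise iterate of the skew product: `fiberIter ω F n θ x = F^n_θ(x)`. -/
def fiberIter (ω : ℝ) (F : T1 → ℝ → ℝ) : ℕ → T1 → ℝ → ℝ
  | 0, _, x => x
  | n + 1, θ, x => fiberIter ω F n (θ + (ω : T1)) (F θ x)

/-- `F` is (the fiber part of) a lift of a quasiperiodically forced circle homeomorphism
over `ω`: `F(θ,x) = (θ+ω, F_θ(x))`, each `F_θ` a strictly increasing homeomorphism of `ℝ`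
commuting with `x ↦ x+1`. -/
structure IsQpfLift (ω : ℝ) (F : T1 → ℝ → ℝ) : Prop where
  cont : Continuous fun p : T1 × ℝ => F p.1 p.2
  mono : ∀ θ, StrictMono (F θ)
  surj : ∀ θ, Function.Surjective (F θ)
  per  : ∀ θ x, F θ (x + 1) = F θ x + 1

/-- `ρ` is the fibered rotation number of the lift `F`. -/
def HasRotNum (ω : ℝ) (F : T1 → ℝ → ℝ) (ρ : ℝ) : Prop :=
  ∀ θ x, Tendsto (fun n : ℕ => (fiberIter ω F n θ x - x) / n) atTop (𝓝 ρ)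

/-- The skew-product map on `T¹ × ℝ` induced by the (fiber part of the) lift. -/
def skew (ω : ℝ) (F : T1 → ℝ → ℝ) : T1 × ℝ → T1 × ℝ :=
  fun p => (p.1 + (ω : T1), F p.1 p.2)

/-- An `F`-invariant strip: a compact invariant set all of whose fibers are nonempty
compact intervals. -/
def IsInvStrip (ω : ℝ) (F : T1 → ℝ → ℝ) (A : Set (T1 × ℝ)) : Prop :=
  IsCompact A ∧ skew ω F '' A = A ∧
    ∀ θ : T1, ∃ a b : ℝ, a ≤ b ∧ {x : ℝ | (θ, x) ∈ A} = Set.Icc a b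

/-- Upper bounding graph `φ⁺_A(θ) = sup A_θ`. -/
def phiSup (A : Set (T1 × ℝ)) (θ : T1) : ℝ := sSup {x : ℝ | (θ, x) ∈ A}

/-- Lower bounding graph `φ⁻_A(θ) = inf A_θ`. -/
def phiInf (A : Set (T1 × ℝ)) (θ : T1) : ℝ := sInf {x : ℝ | (θ, x) ∈ A}

/-- `A ≺ B`: the strip `A` lies strictly below the strip `B`. -/
def StripLt (A B : Set (T1 × ℝ)) : Prop := ∀ θ, phiSup A θ < phiInf B θ

/-- A minimal invariant strip: one not strictly containing another invariant strip. -/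
def IsMinimalStrip (ω : ℝ) (F : T1 → ℝ → ℝ) (A : Set (T1 × ℝ)) : Prop :=
  IsInvStrip ω F A ∧ ∀ S : Set (T1 × ℝ), IsInvStrip ω F S → S ⊆ A → S = A


/-!
Suppose an `ε`-perturbed orbit starting above `A` stays below `φ⁺_B` forever. The minimum `c` of
the first `N` push-forwards of `γ` is a continuous curve between `A` and `B` which `F` moves
upwards. The pull-backs of the graph of `c` accumulate on a compact invariant set below `B`; since
no invariant strip lies strictly between `A` and `B`, and by minimality of `A`, this set contains
the graph of `φ⁺_A`. So some pull-back of `c` comes close to `min φ⁺_A`, and the perturbed orbit,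
which lies `ε` above `A` and is spread densely by the irrational rotation, gets above `c` and then
stays above it. The upper graph `ψ` of its `ω`-limit set satisfies `F_θ(ψ θ) = ψ(θ + ω) - ε`, so
`F` moves it downwards and it lies strictly below `φ⁺_B`. The region between `c` and `ψ` is then
forward invariant under `F`, and its `ω`-limit set is a compact invariant set meeting neither `A`
nor `B` (an invariant set meeting a minimal strip contains its upper graph), whose fiberwise hull
is an invariant strip strictly between `A` and `B`.
-/

open Set

namespace Homeomorph

variable {X : Type*} [TopologicalSpace X]

theorem image_omegaLimit_iterate (h : X ≃ₜ X) (s : Set X) :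
    h '' omegaLimit atTop (fun n x => h^[n] x) s = omegaLimit atTop (fun n x => h^[n] x) s := by
  apply Subset.antisymm
  · rintro _ ⟨y, hy, rfl⟩
    refine omegaLimit_subset_of_tendsto _ s (tendsto_add_atTop_nat 1) ?_
    exact mapsTo_omegaLimit s (mapsTo_id s)
      (fun n x => (Function.iterate_succ_apply' h n x).symm) h.continuous hy
  · intro y hy
    refine ⟨h.symm y, ?_, h.apply_symm_apply y⟩
    refine omegaLimit_subset_of_tendsto _ s (tendsto_sub_atTop_nat 1) ?_
    refine mapsTo_omegaLimit' s (mapsTo_id s) ?_ h.symm.continuous hy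
    filter_upwards [eventually_ge_atTop 1] with n hn x _
    obtain ⟨k, rfl⟩ := Nat.exists_eq_add_of_le' hn
    simp [Function.iterate_succ_apply']

theorem exists_invariant_subset_closure_orbit (h : X ≃ₜ X) {s : Set X} (hs : s.Nonempty)
    (hc : IsCompact (closure (⋃ n, h^[n] '' s))) :
    ∃ K, K.Nonempty ∧ IsCompact K ∧ h '' K = K ∧ K ⊆ closure (⋃ n, h^[n] '' s) := by
  have horbit : image2 (fun n x => h^[n] x) univ s = ⋃ n, h^[n] '' s := by
    ext; simp
  have hsub : omegaLimit atTop (fun n x => h^[n] x) s ⊆ closure (⋃ n, h^[n] '' s) :=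
    horbit ▸ omegaLimit_subset_closure_image2 _ _ _ univ_mem
  refine ⟨_, ?_, hc.of_isClosed_subset (isClosed_omegaLimit _ _ _) hsub,
    h.image_omegaLimit_iterate s, hsub⟩
  exact nonempty_omegaLimit_of_isCompact_absorbing _ _ _ hc
    ⟨_, univ_mem, horbit ▸ subset_rfl⟩ hs

end Homeomorph

theorem Irrational.denseRange_add_nsmul {ω : ℝ} (hω : Irrational ω) (θ : T1) :
    DenseRange fun n : ℕ => θ + n • (ω : T1) := by
  have h : DenseRange fun n : ℕ => n • (ω : T1) :=
    denseRange_zsmul_iff_nsmul.1 (AddCircle.denseRange_zsmul_coe_iff.2 (by simpa using hω))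
  exact (Homeomorph.addLeft θ).surjective.denseRange.comp h (continuous_const.add continuous_id)

theorem Irrational.eq_univ_of_isClosed_of_add_mem {ω : ℝ} (hω : Irrational ω) {P : Set T1}
    (hP : IsClosed P) (hne : P.Nonempty) (hadd : ∀ θ ∈ P, θ + (ω : T1) ∈ P) :
    P = univ := by
  obtain ⟨θ, hθ⟩ := hne
  have horbit : ∀ n : ℕ, θ + n • (ω : T1) ∈ P := by
    intro n
    induction n with
    | zero => simpa using hθ
    | succ n ih => simpa [succ_nsmul, add_assoc] using hadd _ ih
  refine eq_univ_of_univ_subset ?_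
  rw [← (hω.denseRange_add_nsmul θ).closure_range]
  exact hP.closure_subset_iff.2 (range_subset_iff.2 horbit)

section Lift

variable {ω : ℝ} {F G : T1 → ℝ → ℝ}

theorem skew_iterate (n : ℕ) (p : T1 × ℝ) :
    (skew ω F)^[n] p = (p.1 + n • (ω : T1), fiberIter ω F n p.1 p.2) := by
  induction n generalizing p with
  | zero => simp [fiberIter]
  | succ n ih =>
    rw [Function.iterate_succ_apply, ih]
    exact Prod.ext (by simp [skew, succ_nsmul', add_assoc]) rfl

theorem fiberIter_succ' (n : ℕ) (θ : T1) (x : ℝ) :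
    fiberIter ω F (n + 1) θ x = F (θ + n • (ω : T1)) (fiberIter ω F n θ x) := by
  simpa [skew_iterate, skew] using
    congrArg Prod.snd (Function.iterate_succ_apply' (skew ω F) n (θ, x))

theorem fiberIter_le_fiberIter (hF : ∀ θ, Monotone (F θ)) (hFG : ∀ θ x, F θ x ≤ G θ x)
    {x y : ℝ} (hxy : x ≤ y) (n : ℕ) (θ : T1) :
    fiberIter ω F n θ x ≤ fiberIter ω G n θ y := by
  induction n generalizing θ x y with
  | zero => exact hxy
  | succ n ih => exact ih ((hF θ hxy).trans (hFG θ y)) (θ + ω)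

namespace IsQpfLift

theorem strictMono_fiberIter (hF : IsQpfLift ω F) (n : ℕ) (θ : T1) :
    StrictMono (fiberIter ω F n θ) := by
  induction n generalizing θ with
  | zero => exact strictMono_id
  | succ n ih => exact (ih (θ + ω)).comp (hF.mono θ)

theorem add_const (hF : IsQpfLift ω F) (ε : ℝ) : IsQpfLift ω fun θ x => F θ x + ε where
  cont := hF.cont.add continuous_const
  mono θ := (hF.mono θ).add_const ε
  surj θ y := by
    obtain ⟨x, hx⟩ := hF.surj θ (y - ε)
    exact ⟨x, by simp [hx]⟩
  per θ x := by simp only [hF.per]; ring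

theorem exists_abs_sub_le (hF : IsQpfLift ω F) : ∃ M, ∀ θ x, |F θ x - x| ≤ M := by
  obtain ⟨M, hM⟩ := (isCompact_univ.prod isCompact_Icc : IsCompact (univ ×ˢ Icc (0 : ℝ) 1))
    |>.exists_bound_of_continuousOn (hF.cont.sub continuous_snd).continuousOn
  refine ⟨M, fun θ x => ?_⟩
  have hper : Function.Periodic (fun x => F θ x - x) 1 := fun x => by
    simp only [hF.per]; ring
  obtain ⟨y, hy, hxy⟩ := hper.exists_mem_Ico₀ one_pos x
  rw [show F θ x - x = F θ y - y from hxy]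
  exact hM (θ, y) ⟨mem_univ θ, Ico_subset_Icc_self hy⟩

theorem continuous_skew (hF : IsQpfLift ω F) : Continuous (skew ω F) :=
  (continuous_fst.add continuous_const).prodMk hF.cont

theorem bijective_skew (hF : IsQpfLift ω F) : Function.Bijective (skew ω F) := by
  refine ⟨fun p q hpq => ?_, fun q => ?_⟩
  · have h1 : p.1 = q.1 := add_right_cancel (congrArg Prod.fst hpq)
    have h2 : F p.1 p.2 = F q.1 q.2 := congrArg Prod.snd hpq
    rw [h1] at h2
    exact Prod.ext h1 ((hF.mono q.1).injective h2)
  · obtain ⟨x, hx⟩ := hF.surj (q.1 - ω) q.2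
    exact ⟨(q.1 - ω, x), Prod.ext (sub_add_cancel _ _) hx⟩

theorem isProperMap_skew (hF : IsQpfLift ω F) : IsProperMap (skew ω F) := by
  obtain ⟨M, hM⟩ := hF.exists_abs_sub_le
  refine isProperMap_iff_isCompact_preimage.2 ⟨hF.continuous_skew, fun K hK => ?_⟩
  obtain ⟨R, hR⟩ := hK.exists_bound_of_continuousOn continuous_snd.continuousOn
  refine (isCompact_univ.prod (isCompact_Icc (a := -(R + M)) (b := R + M))).of_isClosed_subset
    (hK.isClosed.preimage hF.continuous_skew) fun p hp => ⟨mem_univ _, ?_⟩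
  obtain ⟨h1, h2⟩ := abs_le.1 (hM p.1 p.2)
  obtain ⟨h3, h4⟩ := abs_le.1 (show |F p.1 p.2| ≤ R by simpa [skew] using hR _ hp)
  exact ⟨by linarith, by linarith⟩

def skewHomeomorph (hF : IsQpfLift ω F) : T1 × ℝ ≃ₜ T1 × ℝ :=
  (Equiv.ofBijective _ hF.bijective_skew).toHomeomorphOfContinuousClosed hF.continuous_skew
    hF.isProperMap_skew.isClosedMap

@[simp]
theorem coe_skewHomeomorph (hF : IsQpfLift ω F) : ⇑hF.skewHomeomorph = skew ω F := rfl

end IsQpfLift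

end Lift

def fiberIcc (l u : T1 → ℝ) : Set (T1 × ℝ) := {p | l p.1 ≤ p.2 ∧ p.2 ≤ u p.1}

section Fibers

variable {ω : ℝ} {F : T1 → ℝ → ℝ} {K : Set (T1 × ℝ)}

theorem isCompact_fiber (hK : IsCompact K) (θ : T1) : IsCompact {x | (θ, x) ∈ K} :=
  (hK.image continuous_snd).of_isClosed_subset (hK.isClosed.preimage (Continuous.prodMk_right θ))
    fun x hx => ⟨(θ, x), hx, rfl⟩

theorem le_phiSup (hK : IsCompact K) {θ : T1} {x : ℝ} (hx : (θ, x) ∈ K) : x ≤ phiSup K θ :=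
  le_csSup (isCompact_fiber hK θ).bddAbove hx

theorem phiInf_le (hK : IsCompact K) {θ : T1} {x : ℝ} (hx : (θ, x) ∈ K) : phiInf K θ ≤ x :=
  csInf_le (isCompact_fiber hK θ).bddBelow hx

theorem mk_phiSup_mem (hK : IsCompact K) {θ : T1} (hθ : {x | (θ, x) ∈ K}.Nonempty) :
    (θ, phiSup K θ) ∈ K :=
  (isCompact_fiber hK θ).sSup_mem hθ

theorem mk_phiInf_mem (hK : IsCompact K) {θ : T1} (hθ : {x | (θ, x) ∈ K}.Nonempty) :
    (θ, phiInf K θ) ∈ K :=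
  (isCompact_fiber hK θ).sInf_mem hθ

theorem bddAbove_range_phiSup (hK : IsCompact K) (hne : ∀ θ, {x | (θ, x) ∈ K}.Nonempty) :
    BddAbove (range (phiSup K)) :=
  (hK.image continuous_snd).bddAbove.mono <| range_subset_iff.2 fun θ =>
    mem_image_of_mem Prod.snd (mk_phiSup_mem hK (hne θ))

theorem bddBelow_range_phiInf (hK : IsCompact K) (hne : ∀ θ, {x | (θ, x) ∈ K}.Nonempty) :
    BddBelow (range (phiInf K)) :=
  (hK.image continuous_snd).bddBelow.mono <| range_subset_iff.2 fun θ =>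
    mem_image_of_mem Prod.snd (mk_phiInf_mem hK (hne θ))

theorem isClosed_setOf_snd_le_phiSup (hK : IsCompact K)
    (hne : ∀ θ, {x | (θ, x) ∈ K}.Nonempty) :
    IsClosed {p : T1 × ℝ | p.2 ≤ phiSup K p.1} := by
  refine isOpen_compl_iff.1 (isOpen_iff_mem_nhds.2 fun p hp => ?_)
  obtain ⟨t, hpt, htp⟩ : ∃ t, phiSup K p.1 < t ∧ t < p.2 := exists_between (not_le.1 hp)
  set P := Prod.fst '' (K ∩ {q | t ≤ q.2})
  have hP : IsClosed P :=
    ((hK.inter_right (isClosed_le continuous_const continuous_snd)).image continuous_fst).isClosed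
  have hpP : p.1 ∉ P := by
    rintro ⟨q, ⟨hqK, hqt⟩, hq⟩
    rw [← hq] at hpt
    exact (le_phiSup hK hqK).not_gt (hpt.trans_le hqt)
  filter_upwards [hP.isOpen_compl.preimage continuous_fst |>.mem_nhds hpP,
    (isOpen_lt continuous_const continuous_snd).mem_nhds htp] with q hqP hqt
  have hsup : phiSup K q.1 < t :=
    not_le.1 fun h => hqP ⟨(q.1, phiSup K q.1), ⟨mk_phiSup_mem hK (hne q.1), h⟩, rfl⟩
  exact not_le.2 (hsup.trans hqt)

theorem isClosed_setOf_phiInf_le_snd (hK : IsCompact K)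
    (hne : ∀ θ, {x | (θ, x) ∈ K}.Nonempty) :
    IsClosed {p : T1 × ℝ | phiInf K p.1 ≤ p.2} := by
  refine isOpen_compl_iff.1 (isOpen_iff_mem_nhds.2 fun p hp => ?_)
  obtain ⟨t, hpt, htp⟩ : ∃ t, p.2 < t ∧ t < phiInf K p.1 := exists_between (not_le.1 hp)
  set P := Prod.fst '' (K ∩ {q | q.2 ≤ t})
  have hP : IsClosed P :=
    ((hK.inter_right (isClosed_le continuous_snd continuous_const)).image continuous_fst).isClosed
  have hpP : p.1 ∉ P := by
    rintro ⟨q, ⟨hqK, hqt⟩, hq⟩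
    rw [← hq] at htp
    exact (phiInf_le hK hqK).not_gt (hqt.trans_lt htp)
  filter_upwards [hP.isOpen_compl.preimage continuous_fst |>.mem_nhds hpP,
    (isOpen_lt continuous_snd continuous_const).mem_nhds hpt] with q hqP hqt
  have hinf : t < phiInf K q.1 :=
    not_le.1 fun h => hqP ⟨(q.1, phiInf K q.1), ⟨mk_phiInf_mem hK (hne q.1), h⟩, rfl⟩
  exact not_le.2 (hqt.trans hinf)

theorem isCompact_closure_of_subset_fiberIcc {l u : T1 → ℝ} (hl : BddBelow (range l))
    (hu : BddAbove (range u)) {S : Set (T1 × ℝ)} (hS : S ⊆ fiberIcc l u) :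
    IsCompact (closure S) := by
  obtain ⟨a, ha⟩ := hl
  obtain ⟨b, hb⟩ := hu
  refine (isCompact_univ.prod (isCompact_Icc (a := a) (b := b))).closure_of_subset
    fun p hp => ⟨mem_univ _, ?_, ?_⟩
  · exact (ha ⟨p.1, rfl⟩).trans (hS hp).1
  · exact (hS hp).2.trans (hb ⟨p.1, rfl⟩)

theorem fiber_nonempty_of_skew_image_eq (hω : Irrational ω) (hK : IsCompact K) (hne : K.Nonempty)
    (hinv : skew ω F '' K = K) (θ : T1) : {x | (θ, x) ∈ K}.Nonempty := by
  have hP : Prod.fst '' K = univ := by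
    refine hω.eq_univ_of_isClosed_of_add_mem (hK.image continuous_fst).isClosed (hne.image _) ?_
    rintro _ ⟨p, hp, rfl⟩
    exact ⟨skew ω F p, hinv ▸ mem_image_of_mem _ hp, rfl⟩
  obtain ⟨p, hp, rfl⟩ := hP.symm ▸ mem_univ θ
  exact ⟨p.2, hp⟩

theorem image_fiber_of_skew_image_eq (hinv : skew ω F '' K = K) (θ : T1) :
    F θ '' {x | (θ, x) ∈ K} = {x | (θ + (ω : T1), x) ∈ K} := by
  ext y
  constructor
  · rintro ⟨x, hx, rfl⟩
    exact hinv ▸ mem_image_of_mem (skew ω F) hx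
  · intro hy
    rw [← hinv] at hy
    obtain ⟨⟨θ', x⟩, hx, hxy⟩ := hy
    obtain rfl : θ' = θ := add_right_cancel (congrArg Prod.fst hxy)
    exact ⟨x, hx, congrArg Prod.snd hxy⟩

theorem map_phiSup_of_skew_image_eq {θ : T1} (hmono : Monotone (F θ)) (hK : IsCompact K)
    (hinv : skew ω F '' K = K) (hθ : {x | (θ, x) ∈ K}.Nonempty) :
    F θ (phiSup K θ) = phiSup K (θ + (ω : T1)) := by
  have := hmono.map_isGreatest ((isCompact_fiber hK θ).isGreatest_sSup hθ)
  rw [image_fiber_of_skew_image_eq hinv] at this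
  exact this.csSup_eq.symm

theorem map_phiInf_of_skew_image_eq {θ : T1} (hmono : Monotone (F θ)) (hK : IsCompact K)
    (hinv : skew ω F '' K = K) (hθ : {x | (θ, x) ∈ K}.Nonempty) :
    F θ (phiInf K θ) = phiInf K (θ + (ω : T1)) := by
  have := hmono.map_isLeast ((isCompact_fiber hK θ).isLeast_sInf hθ)
  rw [image_fiber_of_skew_image_eq hinv] at this
  exact this.csInf_eq.symm

end Fibers

section Strips

variable {ω : ℝ} {F : T1 → ℝ → ℝ} {l u : T1 → ℝ} {K S A B : Set (T1 × ℝ)}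

theorem phiSup_fiberIcc {θ : T1} (h : l θ ≤ u θ) : phiSup (fiberIcc l u) θ = u θ :=
  csSup_Icc h

theorem phiInf_fiberIcc {θ : T1} (h : l θ ≤ u θ) : phiInf (fiberIcc l u) θ = l θ :=
  csInf_Icc h

theorem phiInf_le_phiSup (hK : IsCompact K) {θ : T1} (hθ : {x | (θ, x) ∈ K}.Nonempty) :
    phiInf K θ ≤ phiSup K θ :=
  phiInf_le hK (mk_phiSup_mem hK hθ)

theorem mapsTo_skew_setOf_le_snd (hF : ∀ θ, Monotone (F θ))
    (hl : ∀ θ, l (θ + (ω : T1)) ≤ F θ (l θ)) :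
    MapsTo (skew ω F) {p | l p.1 ≤ p.2} {p | l p.1 ≤ p.2} :=
  fun p hp => (hl p.1).trans (hF p.1 hp)

theorem mapsTo_skew_setOf_snd_le (hF : ∀ θ, Monotone (F θ))
    (hu : ∀ θ, F θ (u θ) ≤ u (θ + (ω : T1))) :
    MapsTo (skew ω F) {p | p.2 ≤ u p.1} {p | p.2 ≤ u p.1} :=
  fun p hp => (hF p.1 hp).trans (hu p.1)

theorem mapsTo_skew_setOf_lt_snd (hF : ∀ θ, StrictMono (F θ))
    (hl : ∀ θ, l (θ + (ω : T1)) ≤ F θ (l θ)) :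
    MapsTo (skew ω F) {p | l p.1 < p.2} {p | l p.1 < p.2} :=
  fun p hp => (hl p.1).trans_lt (hF p.1 hp)

theorem mapsTo_skew_setOf_snd_lt (hF : ∀ θ, StrictMono (F θ))
    (hu : ∀ θ, F θ (u θ) ≤ u (θ + (ω : T1))) :
    MapsTo (skew ω F) {p | p.2 < u p.1} {p | p.2 < u p.1} :=
  fun p hp => (hF p.1 hp).trans_le (hu p.1)

theorem skew_image_fiberIcc (hF : IsQpfLift ω F) (hl : ∀ θ, F θ (l θ) = l (θ + (ω : T1)))
    (hu : ∀ θ, F θ (u θ) = u (θ + (ω : T1))) : skew ω F '' fiberIcc l u = fiberIcc l u := by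
  have hmono θ := (hF.mono θ).monotone
  refine Subset.antisymm (((mapsTo_skew_setOf_le_snd hmono fun θ => (hl θ).ge).inter_inter
    (mapsTo_skew_setOf_snd_le hmono fun θ => (hu θ).le)).image_subset) fun p hp => ?_
  obtain ⟨q, rfl⟩ := hF.bijective_skew.2 p
  refine mem_image_of_mem _ ⟨not_lt.1 fun h => ?_, not_lt.1 fun h => ?_⟩
  · exact not_lt.2 hp.1 (mapsTo_skew_setOf_snd_lt hF.mono (fun θ => (hl θ).le) h)
  · exact not_lt.2 hp.2 (mapsTo_skew_setOf_lt_snd hF.mono (fun θ => (hu θ).ge) h)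

theorem isInvStrip_fiberIcc_of_skew_image_eq (hF : IsQpfLift ω F) (hK : IsCompact K)
    (hinv : skew ω F '' K = K) (hne : ∀ θ, {x | (θ, x) ∈ K}.Nonempty) :
    IsInvStrip ω F (fiberIcc (phiInf K) (phiSup K)) := by
  have hclosed : IsClosed (fiberIcc (phiInf K) (phiSup K)) :=
    (isClosed_setOf_phiInf_le_snd hK hne).inter (isClosed_setOf_snd_le_phiSup hK hne)
  refine ⟨hclosed.closure_eq ▸ isCompact_closure_of_subset_fiberIcc
      (bddBelow_range_phiInf hK hne) (bddAbove_range_phiSup hK hne) subset_rfl,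
    skew_image_fiberIcc hF
      (fun θ => map_phiInf_of_skew_image_eq (hF.mono θ).monotone hK hinv (hne θ))
      (fun θ => map_phiSup_of_skew_image_eq (hF.mono θ).monotone hK hinv (hne θ)),
    fun θ => ⟨_, _, phiInf_le_phiSup hK (hne θ), rfl⟩⟩

namespace IsInvStrip

theorem fiberIcc_eq (hS : IsInvStrip ω F S) : fiberIcc (phiInf S) (phiSup S) = S := by
  ext ⟨θ, x⟩
  obtain ⟨a, b, hab, hfib⟩ := hS.2.2 θ
  have hinf : phiInf S θ = a := by rw [phiInf, hfib, csInf_Icc hab]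
  have hsup : phiSup S θ = b := by rw [phiSup, hfib, csSup_Icc hab]
  change phiInf S θ ≤ x ∧ x ≤ phiSup S θ ↔ x ∈ {x | (θ, x) ∈ S}
  rw [hfib, hinf, hsup]
  rfl

theorem fiber_nonempty (hS : IsInvStrip ω F S) (θ : T1) : {x | (θ, x) ∈ S}.Nonempty := by
  obtain ⟨a, b, hab, hfib⟩ := hS.2.2 θ
  exact hfib ▸ nonempty_Icc.2 hab

theorem map_phiSup (hF : IsQpfLift ω F) (hS : IsInvStrip ω F S) (θ : T1) :
    F θ (phiSup S θ) = phiSup S (θ + (ω : T1)) :=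
  map_phiSup_of_skew_image_eq (hF.mono θ).monotone hS.1 hS.2.1 (hS.fiber_nonempty θ)

theorem map_phiInf (hF : IsQpfLift ω F) (hS : IsInvStrip ω F S) (θ : T1) :
    F θ (phiInf S θ) = phiInf S (θ + (ω : T1)) :=
  map_phiInf_of_skew_image_eq (hF.mono θ).monotone hS.1 hS.2.1 (hS.fiber_nonempty θ)

end IsInvStrip

theorem IsMinimalStrip.mk_phiSup_mem_of_inter_nonempty (hω : Irrational ω) (hF : IsQpfLift ω F)
    (hA : IsMinimalStrip ω F A) (hK : IsCompact K) (hinv : skew ω F '' K = K)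
    (hKA : (K ∩ A).Nonempty) (θ : T1) : (θ, phiSup A θ) ∈ K := by
  have hK' : IsCompact (K ∩ A) := hK.inter_right hA.1.1.isClosed
  have hinv' : skew ω F '' (K ∩ A) = K ∩ A := by
    rw [image_inter hF.bijective_skew.1, hinv, hA.1.2.1]
  have hne := fiber_nonempty_of_skew_image_eq hω hK' hKA hinv'
  have hsub : fiberIcc (phiInf (K ∩ A)) (phiSup (K ∩ A)) ⊆ A := by
    rintro p ⟨h1, h2⟩
    rw [← hA.1.fiberIcc_eq]
    exact ⟨(le_csInf (hne p.1) fun x hx => phiInf_le hA.1.1 hx.2).trans h1,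
      h2.trans (csSup_le (hne p.1) fun x hx => le_phiSup hA.1.1 hx.2)⟩
  have heq := hA.2 _ (isInvStrip_fiberIcc_of_skew_image_eq hF hK' hinv' hne) hsub
  have hsup : phiSup A θ = phiSup (K ∩ A) θ := by
    conv_lhs => rw [← heq, phiSup_fiberIcc (phiInf_le_phiSup hK' (hne θ))]
  exact hsup ▸ (mk_phiSup_mem hK' (hne θ)).1

theorem mk_phiSup_mem_or_of_not_exists_between (hω : Irrational ω) (hF : IsQpfLift ω F)
    (hA : IsMinimalStrip ω F A) (hB : IsMinimalStrip ω F B)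
    (hgap : ¬ ∃ S : Set (T1 × ℝ), IsInvStrip ω F S ∧ StripLt A S ∧ StripLt S B)
    (hK : IsCompact K) (hne : K.Nonempty) (hinv : skew ω F '' K = K)
    (hKAB : K ⊆ fiberIcc (phiInf A) (phiSup B)) :
    (∀ θ, (θ, phiSup A θ) ∈ K) ∨ ∀ θ, (θ, phiSup B θ) ∈ K := by
  have hfib := fiber_nonempty_of_skew_image_eq hω hK hne hinv
  have hS := isInvStrip_fiberIcc_of_skew_image_eq hF hK hinv hfib
  by_cases hAK : StripLt A (fiberIcc (phiInf K) (phiSup K))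
  · obtain ⟨θ, hθ⟩ := not_forall.1 fun hKB => hgap ⟨_, hS, hAK, hKB⟩
    rw [phiSup_fiberIcc (phiInf_le_phiSup hK (hfib θ)), not_lt] at hθ
    have hmem := mk_phiSup_mem hK (hfib θ)
    exact .inr <| hB.mk_phiSup_mem_of_inter_nonempty hω hF hK hinv
      ⟨_, hmem, hB.1.fiberIcc_eq ▸ ⟨hθ, (hKAB hmem).2⟩⟩
  · obtain ⟨θ, hθ⟩ := not_forall.1 hAK
    rw [phiInf_fiberIcc (phiInf_le_phiSup hK (hfib θ)), not_lt] at hθ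
    have hmem := mk_phiInf_mem hK (hfib θ)
    exact .inl <| hA.mk_phiSup_mem_of_inter_nonempty hω hF hK hinv
      ⟨_, hmem, hA.1.fiberIcc_eq ▸ ⟨(hKAB hmem).1, hθ⟩⟩

end Strips

section Curves

variable {ω : ℝ} {F : T1 → ℝ → ℝ} {γ : T1 → ℝ} {A : Set (T1 × ℝ)}

/-- The graph of `pushCurve ω F γ n` is the image of the graph of `γ` under the `n`-th iterate
of the skew product. -/
def pushCurve (ω : ℝ) (F : T1 → ℝ → ℝ) (γ : T1 → ℝ) : ℕ → T1 → ℝ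
  | 0 => γ
  | n + 1 => fun θ => F (θ - ω) (pushCurve ω F γ n (θ - ω))

theorem pushCurve_succ_add (n : ℕ) (θ : T1) :
    pushCurve ω F γ (n + 1) (θ + ω) = F θ (pushCurve ω F γ n θ) := by
  simp [pushCurve]

theorem pushCurve_add_nsmul (n : ℕ) (θ : T1) :
    pushCurve ω F γ n (θ + n • (ω : T1)) = fiberIter ω F n θ (γ θ) := by
  induction n with
  | zero => simp [pushCurve, fiberIter]
  | succ n ih => rw [succ_nsmul, ← add_assoc, pushCurve_succ_add, ih, fiberIter_succ']

theorem continuous_pushCurve (hF : IsQpfLift ω F) (hγ : Continuous γ) (n : ℕ) :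
    Continuous (pushCurve ω F γ n) := by
  induction n with
  | zero => exact hγ
  | succ n ih =>
    have hsub : Continuous fun θ : T1 => θ - (ω : T1) := continuous_id.sub continuous_const
    exact hF.cont.comp (hsub.prodMk (ih.comp hsub))

theorem IsInvStrip.phiSup_lt_pushCurve (hF : IsQpfLift ω F) (hA : IsInvStrip ω F A)
    (hAγ : ∀ θ, phiSup A θ < γ θ) (n : ℕ) (θ : T1) :
    phiSup A θ < pushCurve ω F γ n θ := by
  induction n generalizing θ with
  | zero => exact hAγ θ
  | succ n ih =>
    have h := hF.mono (θ - ω) (ih (θ - ω))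
    rwa [hA.map_phiSup hF, sub_add_cancel] at h

/-- The witness is the minimum of the first `N` push-forwards of `γ`: since `F^N` moves the graph
of `γ` upwards, `F` moves the graph of this minimum upwards. -/
theorem exists_subinvariant_curve (hF : IsQpfLift ω F) (hA : IsInvStrip ω F A)
    (hγ : Continuous γ) (hAγ : ∀ θ, phiSup A θ < γ θ) {N : ℕ} (hN : 1 ≤ N)
    (habove : ∀ θ, γ (θ + N • (ω : T1)) < fiberIter ω F N θ (γ θ)) :
    ∃ c : T1 → ℝ, Continuous c ∧ (∀ θ, phiSup A θ < c θ) ∧ (∀ θ, c θ ≤ γ θ) ∧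
      ∀ θ, c (θ + ω) ≤ F θ (c θ) := by
  have hne : (Finset.range N).Nonempty := Finset.nonempty_range_iff.2 (by omega)
  set c : T1 → ℝ := fun θ => (Finset.range N).inf' hne fun r => pushCurve ω F γ r θ
  have hc_le : ∀ r < N, ∀ θ, c θ ≤ pushCurve ω F γ r θ :=
    fun r hr θ => Finset.inf'_le _ (Finset.mem_range.2 hr)
  have hγN : ∀ θ, γ θ < pushCurve ω F γ N θ := fun θ => by
    have h := habove (θ - N • (ω : T1))
    rwa [← pushCurve_add_nsmul, sub_add_cancel] at h
  refine ⟨c, Continuous.finset_inf'_apply hne fun r _ => continuous_pushCurve hF hγ r,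
    fun θ => (Finset.lt_inf'_iff hne).2 fun r _ => hA.phiSup_lt_pushCurve hF hAγ r θ,
    hc_le 0 (by omega), fun θ => ?_⟩
  obtain ⟨r, hr, hcr⟩ := Finset.exists_mem_eq_inf' hne fun r => pushCurve ω F γ r θ
  rw [show c θ = _ from hcr, ← pushCurve_succ_add (F := F)]
  rcases Nat.lt_or_eq_of_le (Finset.mem_range.1 hr : r + 1 ≤ N) with h | h
  · exact hc_le _ h _
  · subst h
    exact (hc_le 0 (by omega) _).trans (hγN _).le

end Curves

section Climbing

variable {ω : ℝ} {F : T1 → ℝ → ℝ} {A B : Set (T1 × ℝ)} {c : T1 → ℝ}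

theorem mk_phiSup_mem_closure_preimage_graph (hω : Irrational ω) (hF : IsQpfLift ω F)
    (hA : IsMinimalStrip ω F A) (hB : IsMinimalStrip ω F B)
    (hgap : ¬ ∃ S : Set (T1 × ℝ), IsInvStrip ω F S ∧ StripLt A S ∧ StripLt S B)
    (hc : Continuous c) (hAc : ∀ θ, phiSup A θ < c θ) (hcB : ∀ θ, c θ < phiInf B θ)
    (hcF : ∀ θ, c (θ + ω) ≤ F θ (c θ)) (θ : T1) :
    (θ, phiSup A θ) ∈ closure (⋃ n, (skew ω F)^[n] ⁻¹' {p | p.2 = c p.1}) := by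
  set h := hF.skewHomeomorph
  set graph := {p : T1 × ℝ | p.2 = c p.1}
  have hAle θ := phiInf_le_phiSup hA.1.1 (hA.1.fiber_nonempty θ)
  have hBle θ := phiInf_le_phiSup hB.1.1 (hB.1.fiber_nonempty θ)
  have hpre : (⋃ n, h.symm^[n] '' graph) = ⋃ n, (skew ω F)^[n] ⁻¹' graph :=
    iUnion_congr fun n => congrFun (image_eq_preimage_of_inverse
      (Function.LeftInverse.iterate h.apply_symm_apply n)
      (Function.RightInverse.iterate h.symm_apply_apply n)) graph
  have hregion : (⋃ n, (skew ω F)^[n] ⁻¹' graph) ⊆ fiberIcc (phiInf A) c := by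
    refine iUnion_subset fun n p hp => ⟨not_lt.1 fun hlt => ?_, not_lt.1 fun hlt => ?_⟩
    · have hmaps := mapsTo_skew_setOf_snd_lt hF.mono fun θ => (hA.1.map_phiInf hF θ).le
      exact (hmaps.iterate n hlt).not_ge (hp ▸ (hAle _).trans (hAc _).le)
    · exact ((mapsTo_skew_setOf_lt_snd hF.mono hcF).iterate n hlt).ne' hp
  have hclosed : IsClosed (fiberIcc (phiInf A) c) :=
    (isClosed_setOf_phiInf_le_snd hA.1.1 hA.1.fiber_nonempty).inter
      (isClosed_le continuous_snd (hc.comp continuous_fst))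
  obtain ⟨K, hne, hK, hinv, hsub⟩ := h.symm.exists_invariant_subset_closure_orbit
    (s := graph) ⟨(θ, c θ), rfl⟩ (hpre ▸ isCompact_closure_of_subset_fiberIcc
      (bddBelow_range_phiInf hA.1.1 hA.1.fiber_nonempty) (isCompact_range hc).bddAbove hregion)
  rw [hpre] at hsub
  have hinv' : skew ω F '' K = K := by
    conv_lhs => rw [← hinv]
    exact h.image_symm_image K
  have hKc : K ⊆ fiberIcc (phiInf A) c := hsub.trans (closure_minimal hregion hclosed)
  rcases mk_phiSup_mem_or_of_not_exists_between hω hF hA hB hgap hK hne hinv'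
    (fun p hp => ⟨(hKc hp).1, (hKc hp).2.trans ((hcB p.1).trans_le (hBle p.1)).le⟩)
    with hKA | hKB
  · exact hsub (hKA θ)
  · exact absurd (hKc (hKB θ)).2 (not_le.2 ((hcB θ).trans_le (hBle θ)))

theorem exists_isOpen_lt_fiberIter (hω : Irrational ω) (hF : IsQpfLift ω F)
    (hA : IsMinimalStrip ω F A) (hB : IsMinimalStrip ω F B)
    (hgap : ¬ ∃ S : Set (T1 × ℝ), IsInvStrip ω F S ∧ StripLt A S ∧ StripLt S B)
    (hc : Continuous c) (hAc : ∀ θ, phiSup A θ < c θ) (hcB : ∀ θ, c θ < phiInf B θ)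
    (hcF : ∀ θ, c (θ + ω) ≤ F θ (c θ)) {a : ℝ} (ha : ⨅ θ, phiSup A θ < a) :
    ∃ m : ℕ, ∃ V : Set T1, IsOpen V ∧ V.Nonempty ∧
      ∀ θ ∈ V, c (θ + m • (ω : T1)) < fiberIter ω F m θ a := by
  obtain ⟨θ, hθ⟩ := exists_lt_of_ciInf_lt ha
  obtain ⟨q, hq, hdist⟩ := Metric.mem_closure_iff.1
    (mk_phiSup_mem_closure_preimage_graph hω hF hA hB hgap hc hAc hcB hcF θ) _ (sub_pos.2 hθ)
  obtain ⟨m, hm⟩ := mem_iUnion.1 hq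
  have hqa : q.2 < a := by
    have hsnd : dist (phiSup A θ) q.2 < a - phiSup A θ := by
      rw [Prod.dist_eq] at hdist
      exact (le_max_right _ _).trans_lt hdist
    linarith [(abs_sub_lt_iff.1 (Real.dist_eq _ _ ▸ hsnd)).2]
  have hcont : Continuous fun θ' : T1 => (skew ω F)^[m] (θ', a) :=
    (hF.continuous_skew.iterate m).comp (continuous_id.prodMk continuous_const)
  refine ⟨m, _, (isOpen_lt (hc.comp continuous_fst) continuous_snd).preimage hcont, ⟨q.1, ?_⟩,
    fun θ' hθ' => by simpa [skew_iterate] using hθ'⟩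
  have hm' : fiberIter ω F m q.1 q.2 = c (q.1 + m • (ω : T1)) := by
    simpa [skew_iterate] using hm
  simpa [skew_iterate, ← hm'] using hF.strictMono_fiberIter m q.1 hqa

theorem exists_iterate_le_snd (hω : Irrational ω) (hF : IsQpfLift ω F)
    (hA : IsMinimalStrip ω F A) (hB : IsMinimalStrip ω F B)
    (hgap : ¬ ∃ S : Set (T1 × ℝ), IsInvStrip ω F S ∧ StripLt A S ∧ StripLt S B)
    (hc : Continuous c) (hAc : ∀ θ, phiSup A θ < c θ) (hcB : ∀ θ, c θ < phiInf B θ)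
    (hcF : ∀ θ, c (θ + ω) ≤ F θ (c θ)) {ε : ℝ} (hε : 0 < ε) {p : T1 × ℝ}
    (hp : phiSup A p.1 < p.2) :
    ∃ k, c ((skew ω fun θ x => F θ x + ε)^[k] p).1 ≤
      ((skew ω fun θ x => F θ x + ε)^[k] p).2 := by
  set G : T1 → ℝ → ℝ := fun θ x => F θ x + ε
  have hFG θ x : F θ x ≤ G θ x := le_add_of_nonneg_right hε.le
  have hbdd : BddBelow (range (phiSup A)) := (hA.1.1.image continuous_snd).bddBelow.mono <|
    range_subset_iff.2 fun θ =>
      mem_image_of_mem Prod.snd (mk_phiSup_mem hA.1.1 (hA.1.fiber_nonempty θ))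
  have habove : ∀ n, phiSup A ((skew ω G)^[n] p).1 < ((skew ω G)^[n] p).2 := fun n =>
    (mapsTo_skew_setOf_lt_snd (hF.add_const ε).mono
      fun θ => (hA.1.map_phiSup hF θ).ge.trans (hFG _ _)).iterate n hp
  have hlevel : ∀ n, (⨅ θ, phiSup A θ) + ε ≤ ((skew ω G)^[n + 1] p).2 := fun n => by
    have h := hF.mono ((skew ω G)^[n] p).1 (habove n)
    rw [hA.1.map_phiSup hF] at h
    rw [Function.iterate_succ_apply']
    exact add_le_add_left ((ciInf_le hbdd _).trans h.le) ε
  obtain ⟨m, V, hV, hVne, hVc⟩ := exists_isOpen_lt_fiberIter hω hF hA hB hgap hc hAc hcB hcF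
    (lt_add_of_pos_right (⨅ θ, phiSup A θ) hε)
  obtain ⟨n, hn⟩ := (hω.denseRange_add_nsmul (p.1 + ω)).exists_mem_open hV hVne
  have hfst : ((skew ω G)^[n + 1] p).1 = p.1 + ω + n • (ω : T1) := by
    simp [skew_iterate, succ_nsmul', add_assoc]
  refine ⟨m + (n + 1), ?_⟩
  rw [Function.iterate_add_apply, skew_iterate m, hfst]
  exact (hVc _ hn).le.trans (fiberIter_le_fiberIter (fun θ => (hF.mono θ).monotone) hFG
    (hlevel n) m _)

theorem false_of_trapping_region (hω : Irrational ω) (hF : IsQpfLift ω F)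
    (hA : IsMinimalStrip ω F A) (hB : IsMinimalStrip ω F B)
    (hgap : ¬ ∃ S : Set (T1 × ℝ), IsInvStrip ω F S ∧ StripLt A S ∧ StripLt S B)
    {l u : T1 → ℝ} (hl : IsClosed {p : T1 × ℝ | l p.1 ≤ p.2})
    (hu : IsClosed {p : T1 × ℝ | p.2 ≤ u p.1}) (hlb : BddBelow (range l))
    (hub : BddAbove (range u)) (hAl : ∀ θ, phiSup A θ < l θ) (huB : ∀ θ, u θ < phiSup B θ)
    (hlF : ∀ θ, l (θ + ω) ≤ F θ (l θ)) (huF : ∀ θ, F θ (u θ) ≤ u (θ + ω))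
    (hne : (fiberIcc l u).Nonempty) : False := by
  have hmono θ := (hF.mono θ).monotone
  have hmaps :=
    (mapsTo_skew_setOf_le_snd hmono hlF).inter_inter (mapsTo_skew_setOf_snd_le hmono huF)
  have horbit : (⋃ n, (skew ω F)^[n] '' fiberIcc l u) ⊆ fiberIcc l u :=
    iUnion_subset fun n => (hmaps.iterate n).image_subset
  obtain ⟨K, hKne, hK, hinv, hsub⟩ := hF.skewHomeomorph.exists_invariant_subset_closure_orbit
    hne (isCompact_closure_of_subset_fiberIcc hlb hub horbit)
  simp only [IsQpfLift.coe_skewHomeomorph] at hinv hsub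
  have hKlu : K ⊆ fiberIcc l u := hsub.trans (closure_minimal horbit (hl.inter hu))
  have hAle θ := phiInf_le_phiSup hA.1.1 (hA.1.fiber_nonempty θ)
  rcases mk_phiSup_mem_or_of_not_exists_between hω hF hA hB hgap hK hKne hinv
    (fun p hp => ⟨(hAle _).trans ((hAl _).le.trans (hKlu hp).1),
      (hKlu hp).2.trans (huB _).le⟩) with h | h
  · exact (hAl 0).not_ge (hKlu (h 0)).1
  · exact (huB 0).not_ge (hKlu (h 0)).2

theorem false_of_orbit_subset_fiberIcc (hω : Irrational ω) (hF : IsQpfLift ω F)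
    (hA : IsMinimalStrip ω F A) (hB : IsMinimalStrip ω F B)
    (hgap : ¬ ∃ S : Set (T1 × ℝ), IsInvStrip ω F S ∧ StripLt A S ∧ StripLt S B)
    (hc : Continuous c) (hAc : ∀ θ, phiSup A θ < c θ)
    (hcF : ∀ θ, c (θ + ω) ≤ F θ (c θ)) {ε : ℝ} (hε : 0 < ε) {q : T1 × ℝ}
    (hq : ∀ n, (skew ω fun θ x => F θ x + ε)^[n] q ∈ fiberIcc c (phiSup B)) : False := by
  have hG := hF.add_const ε
  have horbit : (⋃ n, (skew ω fun θ x => F θ x + ε)^[n] '' {q}) ⊆ fiberIcc c (phiSup B) :=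
    iUnion_subset fun n => by simpa using hq n
  have hcl : IsClosed {p : T1 × ℝ | c p.1 ≤ p.2} :=
    isClosed_le (hc.comp continuous_fst) continuous_snd
  obtain ⟨L, hLne, hL, hinv, hsub⟩ := hG.skewHomeomorph.exists_invariant_subset_closure_orbit
    (singleton_nonempty q) (isCompact_closure_of_subset_fiberIcc (isCompact_range hc).bddBelow
      (bddAbove_range_phiSup hB.1.1 hB.1.fiber_nonempty) horbit)
  simp only [IsQpfLift.coe_skewHomeomorph] at hinv hsub
  have hLB : L ⊆ fiberIcc c (phiSup B) := hsub.trans (closure_minimal horbit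
    (hcl.inter (isClosed_setOf_snd_le_phiSup hB.1.1 hB.1.fiber_nonempty)))
  have hfib := fiber_nonempty_of_skew_image_eq hω hL hLne hinv
  have hψ θ : F θ (phiSup L θ) + ε = phiSup L (θ + ω) :=
    map_phiSup_of_skew_image_eq (hG.mono θ).monotone hL hinv (hfib θ)
  have hψB θ : phiSup L θ < phiSup B θ := by
    have h := (hLB (mk_phiSup_mem hL (hfib (θ + ω)))).2
    rw [← hψ, ← hB.1.map_phiSup hF] at h
    exact (hF.mono θ).lt_iff_lt.1 (by linarith)
  exact false_of_trapping_region hω hF hA hB hgap hcl (isClosed_setOf_snd_le_phiSup hL hfib)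
    (isCompact_range hc).bddBelow (bddAbove_range_phiSup hL hfib) hAc hψB hcF
    (fun θ => by linarith [hψ θ]) ⟨_, (hLB (mk_phiSup_mem hL (hfib 0))).1, le_rfl⟩

end Climbing

theorem curve_above_case_climbing_general
    (ω : ℝ) (hω : Irrational ω)
    (F : T1 → ℝ → ℝ) (hF : IsQpfLift ω F)
    (ε : ℝ) (hε : 0 < ε)
    (A B : Set (T1 × ℝ))
    (hA : IsMinimalStrip ω F A) (hB : IsMinimalStrip ω F B)
    (hgap : ¬ ∃ S : Set (T1 × ℝ), IsInvStrip ω F S ∧ StripLt A S ∧ StripLt S B)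
    (C : Set (T1 × ℝ))
    (hC : C = {p : T1 × ℝ | phiSup A p.1 < p.2 ∧ p.2 < phiInf B p.1})
    (γ : T1 → ℝ) (hγ : Continuous γ) (hγC : ∀ θ, (θ, γ θ) ∈ C)
    (N : ℕ) (hN : 1 ≤ N)
    (habove : ∀ θ, γ (θ + N • (ω : T1)) < fiberIter ω F N θ (γ θ)) :
    ∀ (θ₀ : T1) (x₀ : ℝ), phiSup A θ₀ < x₀ →
      ∃ k : ℕ, phiSup B (θ₀ + k • (ω : T1)) <
        fiberIter ω (fun θ x => F θ x + ε) k θ₀ x₀ := by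
  intro θ₀ x₀ hx₀
  subst hC
  obtain ⟨c, hc, hAc, hcγ, hcF⟩ :=
    exists_subinvariant_curve hF hA.1 hγ (fun θ => (hγC θ).1) hN habove
  have hcB θ : c θ < phiInf B θ := (hcγ θ).trans_lt (hγC θ).2
  obtain ⟨k, hk⟩ :=
    exists_iterate_le_snd hω hF hA hB hgap hc hAc hcB hcF hε (p := (θ₀, x₀)) hx₀
  by_contra! hstay
  have hmaps := mapsTo_skew_setOf_le_snd (fun θ => ((hF.add_const ε).mono θ).monotone)
    fun θ => (hcF θ).trans (le_add_of_nonneg_right hε.le)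
  refine false_of_orbit_subset_fiberIcc hω hF hA hB hgap hc hAc hcF hε fun n =>
    ⟨hmaps.iterate n hk, ?_⟩
  rw [← Function.iterate_add_apply, skew_iterate]
  exact hstay (n + k)

/-- case (𝒜1)(b) of the Claim in the proof of Proposition 4.1:
if between two neighboring minimal invariant strips there is a continuous curve mapped
strictly above itself by some iterate of `F`, then every `ε`-perturbed orbit starting
above `A` eventually climbs above `B`. -/
theorem curve_above_case_climbing
    (ω : ℝ) (hω : Irrational ω)
    (F : T1 → ℝ → ℝ) (hF : IsQpfLift ω F)
    (ε : ℝ) (hε : 0 < ε)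
    (A B : Set (T1 × ℝ))
    (hA : IsMinimalStrip ω F A) (hB : IsMinimalStrip ω F B) (hAB : StripLt A B)
    (hgap : ¬ ∃ S : Set (T1 × ℝ), IsInvStrip ω F S ∧ StripLt A S ∧ StripLt S B)
    (C : Set (T1 × ℝ))
    (hC : C = {p : T1 × ℝ | phiSup A p.1 < p.2 ∧ p.2 < phiInf B p.1})
    (γ : T1 → ℝ) (hγ : Continuous γ) (hγC : ∀ θ, (θ, γ θ) ∈ C)
    (N : ℕ) (hN : 1 ≤ N)
    (habove : ∀ θ, γ (θ + N • (ω : T1)) < fiberIter ω F N θ (γ θ)) :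
    ∀ (θ₀ : T1) (x₀ : ℝ), phiSup A θ₀ < x₀ →
      ∃ k : ℕ, phiSup B (θ₀ + k • (ω : T1)) <
        fiberIter ω (fun θ x => F θ x + ε) k θ₀ x₀ :=
  curve_above_case_climbing_general ω hω F hF ε hε A B hA hB hgap C hC γ hγ hγC N hN habove
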